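/- arXiv:2108.07315 — 3 statements merged into one kernel-verified Lean document; each statement's English description precedes it below -/
import Mathlib

section
/- (A fixed point of the stable inversion equation solves the inverse dynamics) Suppose η : ℤ → ℝ^n satisfies Σ_{k∈ℤ} ‖f̃(η(k), 𝓎(k), k) − Ã η(k)‖_∞ < ∞ and satisfies the fixed-point equation η(k) = Σ_{i∈ℤ} φ(k−i)( f̃(η(i−1), 𝓎(i−1), i−1) − Ã η(i−1) ) for every k ∈ ℤ. Then η is an exact solution of the inverse state dynamics: η(k+1) = f̃(η(k), 𝓎(k), k) for all k ∈ ℤ. -/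
/-! The kernel `φ` is a two-sided Green's function of the linear part:
`φ(m + 1) = Ã φ(m) + δ_{m,-1} I`. Hence applying `Ã` to the fixed-point series for `η(k)` gives
the series for `η(k + 1)` up to its single term at `i = k + 1`, which is
`f̃(η(k), 𝓎(k), k) - Ã η(k)`; so `η(k + 1) = Ã η(k) + (f̃(η(k), 𝓎(k), k) - Ã η(k))`. -/

noncomputable section

attribute [local instance] Matrix.linftyOpNormedAddCommGroup

/-- All complex eigenvalues of the real matrix have modulus < 1. -/
def SpecLtOne {v : ℕ} (M : Matrix (Fin v) (Fin v) ℝ) : Prop :=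
  ∀ z ∈ spectrum ℂ (M.map (algebraMap ℝ ℂ)), ‖z‖ < 1

/-- All complex eigenvalues of the real matrix have modulus > 1. -/
def SpecGtOne {w : ℕ} (M : Matrix (Fin w) (Fin w) ℝ) : Prop :=
  ∀ z ∈ spectrum ℂ (M.map (algebraMap ℝ ℂ)), 1 < ‖z‖

/-- The stable inversion kernel φ : φ(k) = diag(Ãₛᵏ,0) for k > 0, diag(I,0) for k = 0,
and diag(0, −(Ãᵤ⁻¹)⁻ᵏ) for k < 0. -/
noncomputable def phiKer {v w : ℕ} (As : Matrix (Fin v) (Fin v) ℝ)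
    (Au : Matrix (Fin w) (Fin w) ℝ) (k : ℤ) :
    Matrix (Fin v ⊕ Fin w) (Fin v ⊕ Fin w) ℝ :=
  if 0 < k then Matrix.fromBlocks (As ^ k.toNat) 0 0 0
  else if k = 0 then Matrix.fromBlocks 1 0 0 0
  else Matrix.fromBlocks 0 0 0 (-(Au⁻¹ ^ (-k).toNat))

/-- The general term `φ(k−i)( f̃(a(i−1), 𝓎(i−1), i−1) − Ã a(i−1) )` of the Picard update. -/
noncomputable def picardTerm {v w μ : ℕ} (As : Matrix (Fin v) (Fin v) ℝ)
    (Au : Matrix (Fin w) (Fin w) ℝ)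
    (ftil : (Fin v ⊕ Fin w → ℝ) → (Fin (μ + 1) → ℝ) → ℤ → (Fin v ⊕ Fin w → ℝ))
    (Y : ℤ → (Fin (μ + 1) → ℝ)) (a : ℤ → (Fin v ⊕ Fin w → ℝ)) (k i : ℤ) :
    Fin v ⊕ Fin w → ℝ :=
  (phiKer As Au (k - i)).mulVec
    (ftil (a (i - 1)) (Y (i - 1)) (i - 1) - (Matrix.fromBlocks As 0 0 Au).mulVec (a (i - 1)))

/-- Local approximate linearity of `f̃` with radius `s` and constants `K₁`, `K₂`. -/
def LocApproxLin {v w μ : ℕ} (As : Matrix (Fin v) (Fin v) ℝ) (Au : Matrix (Fin w) (Fin w) ℝ)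
    (ftil : (Fin v ⊕ Fin w → ℝ) → (Fin (μ + 1) → ℝ) → ℤ → (Fin v ⊕ Fin w → ℝ))
    (s K₁ K₂ : ℝ) : Prop :=
  ∀ (k : ℤ) (a b : Fin v ⊕ Fin w → ℝ), ‖a‖ ≤ s → ‖b‖ ≤ s →
    ∀ (ya yb : Fin (μ + 1) → ℝ), ‖ftil 0 ya k‖ ≤ s → ‖ftil 0 yb k‖ ≤ s →
      ‖(ftil a ya k - (Matrix.fromBlocks As 0 0 Au).mulVec a) -
          (ftil b yb k - (Matrix.fromBlocks As 0 0 Au).mulVec b)‖ ≤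
        K₁ * ‖a - b‖ + K₂ * ‖ftil 0 ya k - ftil 0 yb k‖

open Matrix

theorem HasSum.matrix_mulVec {ι R m n : Type*} [NonUnitalNonAssocSemiring R] [TopologicalSpace R]
    [IsTopologicalSemiring R] [Fintype n] (A : Matrix m n R) {f : ι → n → R} {x : n → R}
    (h : HasSum f x) : HasSum (fun i ↦ A *ᵥ f i) (A *ᵥ x) :=
  h.map (AddMonoidHom.mk ⟨(A *ᵥ ·), A.mulVec_zero⟩ A.mulVec_add)
    (continuous_const.matrix_mulVec continuous_id)

section StableInversion

variable {v w : ℕ} (As : Matrix (Fin v) (Fin v) ℝ) (Au : Matrix (Fin w) (Fin w) ℝ)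

lemma phiKer_natCast (n : ℕ) : phiKer As Au n = fromBlocks (As ^ n) 0 0 0 := by
  cases n <;> simp [phiKer]

lemma phiKer_neg_add_one (n : ℕ) :
    phiKer As Au (-(n + 1)) = fromBlocks 0 0 0 (-(Au⁻¹ ^ (n + 1))) := by
  have hneg : ¬ (0 : ℤ) < -(n + 1) := by omega
  have hne : -((n : ℤ) + 1) ≠ 0 := by omega
  simp only [phiKer, if_neg hneg, if_neg hne, neg_neg]
  norm_cast

lemma phiKer_add_one (hAu : IsUnit Au.det) (m : ℤ) :
    phiKer As Au (m + 1) =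
      fromBlocks As 0 0 Au * phiKer As Au m + if m = -1 then 1 else 0 := by
  rcases m with n | n
  · rw [Int.ofNat_eq_natCast, ← Nat.cast_add_one, phiKer_natCast, phiKer_natCast,
      if_neg (by omega), fromBlocks_multiply, pow_succ']
    simp
  · rw [Int.negSucc_eq, phiKer_neg_add_one]
    rcases n with _ | n
    · rw [show -(((0 : ℕ) : ℤ) + 1) + 1 = ((0 : ℕ) : ℤ) by simp, phiKer_natCast, if_pos (by simp),
        ← fromBlocks_one, fromBlocks_multiply, fromBlocks_add]
      simp [mul_nonsing_inv Au hAu]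
    · rw [show -(((n + 1 : ℕ) : ℤ) + 1) + 1 = -((n : ℤ) + 1) by push_cast; ring,
        phiKer_neg_add_one, if_neg (by omega), fromBlocks_multiply, pow_succ' Au⁻¹ (n + 1)]
      simp [← mul_assoc, mul_nonsing_inv Au hAu]

lemma picardTerm_add_one {μ : ℕ} (hAu : IsUnit Au.det)
    (ftil : (Fin v ⊕ Fin w → ℝ) → (Fin (μ + 1) → ℝ) → ℤ → (Fin v ⊕ Fin w → ℝ))
    (Y : ℤ → (Fin (μ + 1) → ℝ)) (a : ℤ → (Fin v ⊕ Fin w → ℝ)) (k i : ℤ) :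
    picardTerm As Au ftil Y a (k + 1) i =
      fromBlocks As 0 0 Au *ᵥ picardTerm As Au ftil Y a k i +
        if i = k + 1 then ftil (a k) (Y k) k - fromBlocks As 0 0 Au *ᵥ a k else 0 := by
  rw [picardTerm, picardTerm, show k + 1 - i = k - i + 1 by ring, phiKer_add_one As Au hAu,
    add_mulVec, ← mulVec_mulVec]
  congr 1
  by_cases hi : i = k + 1
  · subst hi
    simp
  · rw [if_neg (by omega), if_neg hi, zero_mulVec]

end StableInversion

theorem fixed_point_solves_inverse_dynamics_general {v w μ : ℕ}
    (As : Matrix (Fin v) (Fin v) ℝ) (Au : Matrix (Fin w) (Fin w) ℝ)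
    (hAudet : IsUnit Au.det)
    (ftil : (Fin v ⊕ Fin w → ℝ) → (Fin (μ + 1) → ℝ) → ℤ → (Fin v ⊕ Fin w → ℝ))
    (Y : ℤ → (Fin (μ + 1) → ℝ))
    (η : ℤ → (Fin v ⊕ Fin w → ℝ))
    (hsum : ∀ k : ℤ, Summable fun i : ℤ => picardTerm As Au ftil Y η k i)
    (hfix : ∀ k : ℤ, η k = ∑' i : ℤ, picardTerm As Au ftil Y η k i) :
    ∀ k : ℤ, η (k + 1) = ftil (η k) (Y k) k := by
  intro k
  have hη : HasSum (picardTerm As Au ftil Y η k) (η k) := hfix k ▸ (hsum k).hasSum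
  have hstep : HasSum (picardTerm As Au ftil Y η (k + 1))
      (fromBlocks As 0 0 Au *ᵥ η k + (ftil (η k) (Y k) k - fromBlocks As 0 0 Au *ᵥ η k)) := by
    rw [funext (picardTerm_add_one As Au hAudet ftil Y η k)]
    exact (hη.matrix_mulVec _).add (hasSum_ite_eq (k + 1) _)
  rw [hfix (k + 1), hstep.tsum_eq, add_sub_cancel]

/-- **A fixed point of the stable inversion equation solves the inverse dynamics.**
If `η` satisfies the fixed-point equation (with absolutely convergent series), then
`η(k+1) = f̃(η(k), 𝓎(k), k)` for all `k ∈ ℤ`. -/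
theorem fixed_point_solves_inverse_dynamics {v w μ : ℕ} (hn : 1 ≤ v + w) (hμ : 1 ≤ μ)
    (As : Matrix (Fin v) (Fin v) ℝ) (Au : Matrix (Fin w) (Fin w) ℝ)
    (hAs : SpecLtOne As) (hAu : SpecGtOne Au) (hAudet : IsUnit Au.det)
    (ftil : (Fin v ⊕ Fin w → ℝ) → (Fin (μ + 1) → ℝ) → ℤ → (Fin v ⊕ Fin w → ℝ))
    (Y : ℤ → (Fin (μ + 1) → ℝ))
    (η : ℤ → (Fin v ⊕ Fin w → ℝ))
    (hw : Summable fun k : ℤ =>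
      ‖ftil (η k) (Y k) k - (Matrix.fromBlocks As 0 0 Au).mulVec (η k)‖)
    (hsum : ∀ k : ℤ, Summable fun i : ℤ => picardTerm As Au ftil Y η k i)
    (hfix : ∀ k : ℤ, η k = ∑' i : ℤ, picardTerm As Au ftil Y η k i) :
    ∀ k : ℤ, η (k + 1) = ftil (η k) (Y k) k :=
  fixed_point_solves_inverse_dynamics_general As Au hAudet ftil Y η hsum hfix
end
end

section
/- (LTI stable inversion: explicit bounded solution on the bi-infinite timeline) Suppose the inverse dynamics are linear: f̃(η, 𝓎, k) = Ã η + B̃ 𝓎 where B̃ = [B̃_s; B̃_u] is partitioned conformally with Ã = diag(Ã_s, Ã_u), and suppose the driving signal 𝓎 : ℤ → ℝ^{μ+1} is bounded. Then for every k ∈ ℤ the series η(k) := Σ_{i∈ℤ} φ(k−i) B̃ 𝓎(i−1) converges absolutely, the sequence η is bounded, its stable block equals Σ_{i=−∞}^{k} Ã_s^{k−i} B̃_s 𝓎(i−1) and its unstable block equals −Σ_{i=k+1}^{∞} Ã_u^{k−i} B̃_u 𝓎(i−1), and η satisfies the full (unstable) recursion η(k+1) = Ã η(k) + B̃ 𝓎(k)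 for all k ∈ ℤ. -/
noncomputable section

/-- The LTI stable inversion solution `η(k) = Σ_{i∈ℤ} φ(k−i) B̃ 𝓎(i−1)`. -/
noncomputable def ltiSol {v w μ : ℕ} (As : Matrix (Fin v) (Fin v) ℝ)
    (Au : Matrix (Fin w) (Fin w) ℝ) (Bt : Matrix (Fin v ⊕ Fin w) (Fin (μ + 1)) ℝ)
    (Y : ℤ → Fin (μ + 1) → ℝ) (k : ℤ) : Fin v ⊕ Fin w → ℝ :=
  ∑' i : ℤ, (phiKer As Au (k - i)).mulVec (Bt.mulVec (Y (i - 1)))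

/-! Gelfand's formula makes the norms of the powers of `Ãₛ` and of `Ãᵤ⁻¹` summable, since both
have their spectrum in the open unit disc. Reindexing the sum over `i ∈ ℤ` by the lag `m = k - i`
and splitting at `m = 0`, the kernel `φ(m)` keeps only the stable block `Ãₛᵐ` for `m ≥ 0` and only
the unstable block `-Ãᵤ⁻¹^(-m)` for `m < 0`; against a bounded input both block series converge
absolutely, which gives convergence, boundedness and the block formulas at once. The recursion is a
shift of the summation index in each block, using `Ãᵤ Ãᵤ⁻¹ = 1` in the anticausal one. -/

open Filter Matrix
open scoped ENNReal

attribute [local instance] Matrix.linftyOpNormedAddCommGroup Matrix.linftyOpNormedRing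
  Matrix.linftyOpNormedAlgebra

theorem summable_norm_pow_of_spectralRadius_lt_one {A : Type*} [NormedRing A]
    [NormedAlgebra ℂ A] [CompleteSpace A] {a : A} (ha : spectralRadius ℂ a < 1) :
    Summable fun n : ℕ => ‖a ^ n‖ := by
  obtain ⟨r, hρr, hr1⟩ := ENNReal.lt_iff_exists_nnreal_btwn.mp ha
  have hroot : ∀ᶠ n : ℕ in atTop, (‖a ^ n‖₊ : ℝ≥0∞) ^ (1 / n : ℝ) < r :=
    (spectrum.pow_nnnorm_pow_one_div_tendsto_nhds_spectralRadius a).eventually_lt_const hρr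
  refine .of_norm_bounded_eventually_nat (summable_geometric_of_lt_one r.2 (mod_cast hr1)) ?_
  filter_upwards [hroot, eventually_ge_atTop 1] with n hn hn1
  have := ENNReal.rpow_lt_rpow hn (by positivity : (0 : ℝ) < n)
  rw [← ENNReal.rpow_mul, one_div_mul_cancel (by positivity), ENNReal.rpow_one,
    ENNReal.rpow_natCast, ← ENNReal.coe_pow, ENNReal.coe_lt_coe] at this
  rw [norm_norm]
  exact_mod_cast this.le

theorem summable_norm_pow_of_forall_mem_spectrum_norm_lt_one {A : Type*} [NormedRing A]
    [NormedAlgebra ℂ A] [CompleteSpace A] {a : A} (h : ∀ z ∈ spectrum ℂ a, ‖z‖ < 1) :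
    Summable fun n : ℕ => ‖a ^ n‖ := by
  rcases subsingleton_or_nontrivial A with hA | hA
  · simp [Subsingleton.elim _ (0 : A)]
  · refine summable_norm_pow_of_spectralRadius_lt_one
      (spectrum.spectralRadius_lt_of_forall_lt a fun z hz => ?_)
    exact_mod_cast h z hz

theorem norm_lt_one_of_mem_spectrum_inv {𝕜 A : Type*} [NormedField 𝕜] [Ring A] [Algebra 𝕜 A]
    (a : Aˣ) (h : ∀ z ∈ spectrum 𝕜 (a : A), 1 < ‖z‖) : ∀ z ∈ spectrum 𝕜 (↑a⁻¹ : A), ‖z‖ < 1 := by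
  intro z hz
  rw [← spectrum.map_inv, Set.mem_inv] at hz
  have hinv := h _ hz
  rw [norm_inv] at hinv
  by_contra! hz1
  exact (inv_le_one_of_one_le₀ hz1).not_gt hinv

theorem Matrix.linfty_opNorm_map_algebraMap {m n : Type*} [Fintype m] [Fintype n]
    (M : Matrix m n ℝ) : ‖M.map (algebraMap ℝ ℂ)‖ = ‖M‖ := by
  simp [linfty_opNorm_def, Complex.coe_algebraMap]

theorem SpecLtOne.summable_norm_pow {v : ℕ} {M : Matrix (Fin v) (Fin v) ℝ}
    (hM : SpecLtOne M) : Summable fun n : ℕ => ‖M ^ n‖ := by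
  simpa only [← Matrix.map_pow, linfty_opNorm_map_algebraMap]
    using summable_norm_pow_of_forall_mem_spectrum_norm_lt_one hM

theorem SpecGtOne.specLtOne_inv {w : ℕ} {M : Matrix (Fin w) (Fin w) ℝ} (hM : SpecGtOne M)
    (hdet : IsUnit M.det) : SpecLtOne M⁻¹ := by
  let f := (algebraMap ℝ ℂ).mapMatrix (m := Fin w)
  let U : (Matrix (Fin w) (Fin w) ℂ)ˣ :=
    ⟨f M, f M⁻¹, by rw [← map_mul, mul_nonsing_inv M hdet, map_one],
      by rw [← map_mul, nonsing_inv_mul M hdet, map_one]⟩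
  exact norm_lt_one_of_mem_spectrum_inv U hM

section Series

variable {ι m n : Type*} [Fintype n]

theorem Matrix.mulVec_tsum (A : Matrix m n ℝ) {g : ι → n → ℝ} (hg : Summable g) :
    A *ᵥ ∑' i, g i = ∑' i, A *ᵥ g i :=
  ((hg.hasSum.mapL (LinearMap.toContinuousLinearMap A.mulVecLin)).tsum_eq).symm

variable [Fintype m]

theorem summable_norm_mulVec {g : ι → Matrix m n ℝ} (hg : Summable fun i => ‖g i‖)
    {x : ι → n → ℝ} {K : ℝ} (hx : ∀ i, ‖x i‖ ≤ K) : Summable fun i => ‖g i *ᵥ x i‖ :=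
  (hg.mul_right K).of_nonneg_of_le (fun _ => norm_nonneg _) fun i =>
    (linfty_opNorm_mulVec _ _).trans (mul_le_mul_of_nonneg_left (hx i) (norm_nonneg _))

theorem norm_tsum_mulVec_le {g : ι → Matrix m n ℝ} (hg : Summable fun i => ‖g i‖)
    {x : ι → n → ℝ} {K : ℝ} (hx : ∀ i, ‖x i‖ ≤ K) :
    ‖∑' i, g i *ᵥ x i‖ ≤ (∑' i, ‖g i‖) * K := by
  rw [← hg.tsum_mul_right]
  exact (norm_tsum_le_tsum_norm (summable_norm_mulVec hg hx)).trans <|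
    (summable_norm_mulVec hg hx).tsum_le_tsum (fun i =>
      (linfty_opNorm_mulVec _ _).trans (mul_le_mul_of_nonneg_left (hx i) (norm_nonneg _)))
      (hg.mul_right K)

variable [DecidableEq n] {A P : Matrix n n ℝ} {x : ℤ → n → ℝ} {K : ℝ}

theorem tsum_pow_mulVec_succ (hA : Summable fun j : ℕ => ‖A ^ j‖) (hx : ∀ k, ‖x k‖ ≤ K)
    (k : ℤ) :
    ∑' j : ℕ, A ^ j *ᵥ x (k + 1 - j - 1) = A *ᵥ ∑' j : ℕ, A ^ j *ᵥ x (k - j - 1) + x k := by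
  have hsum (l : ℤ) : Summable fun j : ℕ => A ^ j *ᵥ x (l - j - 1) :=
    (summable_norm_mulVec hA fun _ => hx _).of_norm
  rw [(hsum (k + 1)).tsum_eq_zero_add, A.mulVec_tsum (hsum k), add_comm _ (x k)]
  congr 1
  · simp
  · refine tsum_congr fun j => ?_
    rw [mulVec_mulVec, ← pow_succ']
    congr 2
    push_cast
    ring

theorem mulVec_tsum_pow_succ_mulVec (hAP : A * P = 1) (hP : Summable fun j : ℕ => ‖P ^ j‖)
    (hx : ∀ k, ‖x k‖ ≤ K) (k : ℤ) :
    A *ᵥ ∑' j : ℕ, P ^ (j + 1) *ᵥ x (k + j) = x k + ∑' j : ℕ, P ^ (j + 1) *ᵥ x (k + 1 + j) := by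
  have hsum (l : ℤ) : Summable fun j : ℕ => P ^ j *ᵥ x (l + j) :=
    (summable_norm_mulVec hP fun _ => hx _).of_norm
  have hP₁ : Summable fun j : ℕ => ‖P ^ (j + 1)‖ := (summable_nat_add_iff 1).mpr hP
  rw [A.mulVec_tsum (summable_norm_mulVec hP₁ fun _ => hx _).of_norm]
  simp_rw [mulVec_mulVec, pow_succ', ← mul_assoc, hAP, one_mul]
  rw [(hsum k).tsum_eq_zero_add]
  congr 1
  · simp
  · refine tsum_congr fun j => ?_
    rw [pow_succ']
    congr 2
    push_cast
    ring

end Series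

section SumType

variable {ι α β E : Type*}

theorem norm_sumElim [Fintype α] [Fintype β] [SeminormedAddGroup E] (u : α → E) (t : β → E) :
    ‖Sum.elim u t‖ = max ‖u‖ ‖t‖ := by
  refine le_antisymm ((pi_norm_le_iff_of_nonneg (by positivity)).mpr ?_) (max_le ?_ ?_)
  · rintro (a | b)
    · exact le_max_of_le_left (norm_le_pi_norm u a)
    · exact le_max_of_le_right (norm_le_pi_norm t b)
  · exact (pi_norm_le_iff_of_nonneg (norm_nonneg _)).mpr fun a =>
      norm_le_pi_norm (Sum.elim u t) (Sum.inl a)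
  · exact (pi_norm_le_iff_of_nonneg (norm_nonneg _)).mpr fun b =>
      norm_le_pi_norm (Sum.elim u t) (Sum.inr b)

theorem HasSum.sumElim [AddCommMonoid E] [TopologicalSpace E] {f : ι → α → E} {g : ι → β → E}
    {a : α → E} {b : β → E} (hf : HasSum f a) (hg : HasSum g b) :
    HasSum (fun i => Sum.elim (f i) (g i)) (Sum.elim a b) :=
  Pi.hasSum.mpr <| Sum.rec (Pi.hasSum.mp hf) (Pi.hasSum.mp hg)

theorem Matrix.fromBlocks_diagonal_mulVec_sumElim {l n R : Type*} [Fintype l] [Fintype n]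
    [NonUnitalNonAssocSemiring R] (A : Matrix l l R) (D : Matrix n n R) (x : l → R) (y : n → R) :
    fromBlocks A 0 0 D *ᵥ Sum.elim x y = Sum.elim (A *ᵥ x) (D *ᵥ y) := by
  simp [fromBlocks_mulVec]

end SumType

section Kernel

variable {v w μ : ℕ} (As : Matrix (Fin v) (Fin v) ℝ) (Au : Matrix (Fin w) (Fin w) ℝ)

theorem phiKer_natCast_mulVec (j : ℕ) (x : Fin v ⊕ Fin w → ℝ) :
    phiKer As Au j *ᵥ x = Sum.elim (As ^ j *ᵥ (x ∘ Sum.inl)) 0 := by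
  rcases j.eq_zero_or_pos with rfl | hj
  · simp [phiKer, fromBlocks_mulVec]
  · simp [phiKer, hj, fromBlocks_mulVec]

theorem phiKer_neg_natCast_add_one_mulVec (j : ℕ) (x : Fin v ⊕ Fin w → ℝ) :
    phiKer As Au (-(j + 1)) *ᵥ x =
      Sum.elim (0 : Fin v → ℝ) (-(Au⁻¹ ^ (j + 1) *ᵥ (x ∘ Sum.inr))) := by
  have hneg : ¬(0 : ℤ) < -(j + 1) := by omega
  have hne : -((j : ℤ) + 1) ≠ 0 := by omega
  have hexp : (-(-((j : ℤ) + 1))).toNat = j + 1 := by omega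
  rw [phiKer, if_neg hneg, if_neg hne, hexp, fromBlocks_mulVec]
  simp [neg_mulVec]

variable (Bt : Matrix (Fin v ⊕ Fin w) (Fin (μ + 1)) ℝ) (Y : ℤ → Fin (μ + 1) → ℝ) (k : ℤ)

theorem summable_norm_ltiSol_summand
    (hs : Summable fun j : ℕ => ‖As ^ j *ᵥ Bt.submatrix Sum.inl id *ᵥ Y (k - j - 1)‖)
    (hu : Summable fun j : ℕ => ‖Au⁻¹ ^ (j + 1) *ᵥ Bt.submatrix Sum.inr id *ᵥ Y (k + j)‖) :
    Summable fun i : ℤ => ‖phiKer As Au (k - i) *ᵥ Bt *ᵥ Y (i - 1)‖ := by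
  have hlag : Summable fun m : ℤ => ‖phiKer As Au m *ᵥ Bt *ᵥ Y (k - m - 1)‖ := by
    refine .of_nat_of_neg_add_one ?_ ?_
    · refine hs.congr fun j => ?_
      rw [phiKer_natCast_mulVec, norm_sumElim, norm_zero, max_eq_left (norm_nonneg _)]
      rfl
    · refine hu.congr fun j => ?_
      rw [phiKer_neg_natCast_add_one_mulVec, norm_sumElim, norm_zero, norm_neg,
        max_eq_right (norm_nonneg _), show k - -((j : ℤ) + 1) - 1 = k + j by ring]
      rfl
  refine ((Equiv.subLeft k).summable_iff.mpr hlag).congr fun i => ?_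
  simp only [Function.comp_apply, Equiv.subLeft_apply, sub_sub_cancel]

theorem ltiSol_eq_sumElim
    (hs : Summable fun j : ℕ => As ^ j *ᵥ Bt.submatrix Sum.inl id *ᵥ Y (k - j - 1))
    (hu : Summable fun j : ℕ => Au⁻¹ ^ (j + 1) *ᵥ Bt.submatrix Sum.inr id *ᵥ Y (k + j)) :
    ltiSol As Au Bt Y k =
      Sum.elim (∑' j : ℕ, As ^ j *ᵥ Bt.submatrix Sum.inl id *ᵥ Y (k - j - 1))
        (-∑' j : ℕ, Au⁻¹ ^ (j + 1) *ᵥ Bt.submatrix Sum.inr id *ᵥ Y (k + j)) := by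
  have hpast := hs.hasSum.sumElim (hasSum_zero (α := Fin w → ℝ))
  have hfuture := (hasSum_zero (α := Fin v → ℝ)).sumElim hu.hasSum.neg
  have hlag := HasSum.of_nat_of_neg_add_one
    (f := fun m : ℤ => phiKer As Au m *ᵥ Bt *ᵥ Y (k - m - 1))
    (hpast.congr_fun fun j => phiKer_natCast_mulVec As Au j _)
    (hfuture.congr_fun fun j => by
      rw [phiKer_neg_natCast_add_one_mulVec, show k - -((j : ℤ) + 1) - 1 = k + j by ring]
      rfl)
  rw [← Sum.elim_add_add, zero_add, add_zero] at hlag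
  refine (((Equiv.subLeft k).hasSum_iff.mpr hlag).congr_fun fun i => ?_).tsum_eq
  simp only [Function.comp_apply, Equiv.subLeft_apply, sub_sub_cancel]

end Kernel

theorem lti_stable_inversion_general {v w μ : ℕ}
    (As : Matrix (Fin v) (Fin v) ℝ) (Au : Matrix (Fin w) (Fin w) ℝ)
    (hAs : SpecLtOne As) (hAu : SpecGtOne Au) (hAudet : IsUnit Au.det)
    (Bt : Matrix (Fin v ⊕ Fin w) (Fin (μ + 1)) ℝ)
    (Y : ℤ → Fin (μ + 1) → ℝ) (hY : ∃ C : ℝ, ∀ k : ℤ, ‖Y k‖ ≤ C) :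
    (∀ k : ℤ, Summable fun i : ℤ => ‖(phiKer As Au (k - i)).mulVec (Bt.mulVec (Y (i - 1)))‖) ∧
    (∃ C : ℝ, ∀ k : ℤ, ‖ltiSol As Au Bt Y k‖ ≤ C) ∧
    (∀ k : ℤ,
      Summable (fun j : ℕ =>
        (As ^ j).mulVec ((Bt.submatrix Sum.inl id).mulVec (Y (k - (j : ℤ) - 1)))) ∧
      (fun a : Fin v => ltiSol As Au Bt Y k (Sum.inl a)) =
        ∑' j : ℕ, (As ^ j).mulVec ((Bt.submatrix Sum.inl id).mulVec (Y (k - (j : ℤ) - 1)))) ∧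
    (∀ k : ℤ,
      Summable (fun j : ℕ =>
        (Au⁻¹ ^ (j + 1)).mulVec ((Bt.submatrix Sum.inr id).mulVec (Y (k + (j : ℤ))))) ∧
      (fun b : Fin w => ltiSol As Au Bt Y k (Sum.inr b)) =
        -∑' j : ℕ, (Au⁻¹ ^ (j + 1)).mulVec ((Bt.submatrix Sum.inr id).mulVec (Y (k + (j : ℤ))))) ∧
    (∀ k : ℤ, ltiSol As Au Bt Y (k + 1) =
        (Matrix.fromBlocks As 0 0 Au).mulVec (ltiSol As Au Bt Y k) + Bt.mulVec (Y k)) := by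
  obtain ⟨C, hC⟩ := hY
  set Bs := Bt.submatrix Sum.inl id
  set Bu := Bt.submatrix Sum.inr id
  have hBsY (m : ℤ) : ‖Bs *ᵥ Y m‖ ≤ ‖Bs‖ * C :=
    (linfty_opNorm_mulVec _ _).trans (mul_le_mul_of_nonneg_left (hC m) (norm_nonneg _))
  have hBuY (m : ℤ) : ‖Bu *ᵥ Y m‖ ≤ ‖Bu‖ * C :=
    (linfty_opNorm_mulVec _ _).trans (mul_le_mul_of_nonneg_left (hC m) (norm_nonneg _))
  have hAsPow := hAs.summable_norm_pow
  have hAuInvPow := (hAu.specLtOne_inv hAudet).summable_norm_pow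
  have hAuInvPow₁ : Summable fun j : ℕ => ‖Au⁻¹ ^ (j + 1)‖ :=
    (summable_nat_add_iff 1).mpr hAuInvPow
  have hs (k : ℤ) := summable_norm_mulVec hAsPow fun j : ℕ => hBsY (k - j - 1)
  have hu (k : ℤ) := summable_norm_mulVec hAuInvPow₁ fun j : ℕ => hBuY (k + j)
  have hsol (k : ℤ) := ltiSol_eq_sumElim As Au Bt Y k (hs k).of_norm (hu k).of_norm
  refine ⟨fun k => summable_norm_ltiSol_summand As Au Bt Y k (hs k) (hu k),
    ⟨max ((∑' j, ‖As ^ j‖) * (‖Bs‖ * C)) ((∑' j, ‖Au⁻¹ ^ (j + 1)‖) * (‖Bu‖ * C)), fun k => ?_⟩,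
    fun k => ⟨(hs k).of_norm, by rw [hsol]; rfl⟩, fun k => ⟨(hu k).of_norm, by rw [hsol]; rfl⟩,
    fun k => ?_⟩
  · rw [hsol, norm_sumElim, norm_neg]
    exact max_le_max (norm_tsum_mulVec_le hAsPow fun _ => hBsY _)
      (norm_tsum_mulVec_le hAuInvPow₁ fun _ => hBuY _)
  · have hBtY : Bt *ᵥ Y k = Sum.elim (Bs *ᵥ Y k) (Bu *ᵥ Y k) := (Sum.elim_comp_inl_inr _).symm
    rw [hsol, hsol, fromBlocks_diagonal_mulVec_sumElim, hBtY, ← Sum.elim_add_add,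
      tsum_pow_mulVec_succ hAsPow hBsY k, mulVec_neg,
      mulVec_tsum_pow_succ_mulVec (mul_nonsing_inv Au hAudet) hAuInvPow hBuY k]
    congr 1
    abel

/-- **LTI stable inversion: explicit bounded solution on the bi-infinite timeline.**
For linear inverse dynamics `f̃(η,𝓎,k) = Ã η + B̃ 𝓎` with bounded driving signal `𝓎`, the series
`η(k) = Σ_{i∈ℤ} φ(k−i) B̃ 𝓎(i−1)` converges absolutely for every `k`, `η` is bounded, its stable
block is `Σ_{i=−∞}^{k} Ãₛ^{k−i} B̃ₛ 𝓎(i−1)`, its unstable block is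
`−Σ_{i=k+1}^{∞} Ãᵤ^{k−i} B̃ᵤ 𝓎(i−1)`, and `η(k+1) = Ã η(k) + B̃ 𝓎(k)` for all `k`. -/
theorem lti_stable_inversion {v w μ : ℕ} (hn : 1 ≤ v + w) (hμ : 1 ≤ μ)
    (As : Matrix (Fin v) (Fin v) ℝ) (Au : Matrix (Fin w) (Fin w) ℝ)
    (hAs : SpecLtOne As) (hAu : SpecGtOne Au) (hAudet : IsUnit Au.det)
    (Bt : Matrix (Fin v ⊕ Fin w) (Fin (μ + 1)) ℝ)
    (Y : ℤ → Fin (μ + 1) → ℝ) (hY : ∃ C : ℝ, ∀ k : ℤ, ‖Y k‖ ≤ C) :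
    (∀ k : ℤ, Summable fun i : ℤ => ‖(phiKer As Au (k - i)).mulVec (Bt.mulVec (Y (i - 1)))‖) ∧
    (∃ C : ℝ, ∀ k : ℤ, ‖ltiSol As Au Bt Y k‖ ≤ C) ∧
    (∀ k : ℤ,
      Summable (fun j : ℕ =>
        (As ^ j).mulVec ((Bt.submatrix Sum.inl id).mulVec (Y (k - (j : ℤ) - 1)))) ∧
      (fun a : Fin v => ltiSol As Au Bt Y k (Sum.inl a)) =
        ∑' j : ℕ, (As ^ j).mulVec ((Bt.submatrix Sum.inl id).mulVec (Y (k - (j : ℤ) - 1)))) ∧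
    (∀ k : ℤ,
      Summable (fun j : ℕ =>
        (Au⁻¹ ^ (j + 1)).mulVec ((Bt.submatrix Sum.inr id).mulVec (Y (k + (j : ℤ))))) ∧
      (fun b : Fin w => ltiSol As Au Bt Y k (Sum.inr b)) =
        -∑' j : ℕ, (Au⁻¹ ^ (j + 1)).mulVec ((Bt.submatrix Sum.inr id).mulVec (Y (k + (j : ℤ))))) ∧
    (∀ k : ℤ, ltiSol As Au Bt Y (k + 1) =
        (Matrix.fromBlocks As 0 0 Au).mulVec (ltiSol As Au Bt Y k) + Bt.mulVec (Y k)) :=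
  lti_stable_inversion_general As Au hAs hAu hAudet Bt Y hY
end
end

section
/- (Avrachenkov's convergence theorem for Newton-type ILC) Suppose there exists ρ > 0 such that g is continuously differentiable on the open ball S(u_d, ρ) = { u ∈ ℝ^M : ‖u − u_d‖₂ < ρ } and its Jacobian Dg is Lipschitz continuous with respect to u on S(u_d, ρ). Suppose the learning matrices satisfy, along the iteration, ‖L_ℓ‖₂ ≤ ε₁ for some constant ε₁ > 0 and ‖I − L_ℓ Dg(u_ℓ)‖₂ ≤ q for some constant q < 1, for all ℓ ≥ 0. Then there exists ε₂ > 0 such that whenever the initial input satisfies ‖u₀ − u_d‖₂ < ε₂, the iterates of the learning law u_{ℓ+1} = u_ℓ + L_ℓ (r − g(u_ℓ)) yield tracking error e_ℓ = r − g(u_ℓ) converging to 0 as ℓ → ∞. -/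
/-!
Write `e_ℓ = u_ℓ - u_d` and `A_ℓ = Dg(u_ℓ)`. Since `g(u_d) = r`, the learning law gives
`e_{ℓ+1} = (I - L_ℓ A_ℓ) e_ℓ + L_ℓ (g(u_d) - g(u_ℓ) - A_ℓ (u_d - u_ℓ))`, and the Lipschitz bound on
`Dg` makes the linearisation remainder `O(‖e_ℓ‖²)`. Hence
`‖e_{ℓ+1}‖ ≤ (q + ε₁ K ‖e_ℓ‖) ‖e_ℓ‖ ≤ (q + ε₁ K ‖e_0‖) ‖e_ℓ‖` as long as `‖e_ℓ‖ ≤ ‖e_0‖`, so for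
small `e_0` the errors contract geometrically, and `r - g(u_ℓ) → 0` by continuity of `g` at `u_d`.
-/

open Metric Filter Topology NNReal

theorem le_pow_mul_of_le_mul_while_le_initial {x : ℕ → ℝ} {c : ℝ} (hc₀ : 0 ≤ c) (hc₁ : c ≤ 1)
    (hx₀ : 0 ≤ x 0) (hstep : ∀ n, x n ≤ x 0 → x (n + 1) ≤ c * x n) (n : ℕ) :
    x n ≤ c ^ n * x 0 := by
  induction n with
  | zero => simp
  | succ n ih =>
    have hle : x n ≤ x 0 := ih.trans (mul_le_of_le_one_left hx₀ (pow_le_one₀ hc₀ hc₁))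
    calc x (n + 1) ≤ c * x n := hstep n hle
      _ ≤ c * (c ^ n * x 0) := by gcongr
      _ = c ^ (n + 1) * x 0 := by ring

section

variable {E F : Type*} [NormedAddCommGroup E] [NormedSpace ℝ E]
  [NormedAddCommGroup F] [NormedSpace ℝ F]

theorem Convex.norm_image_sub_sub_fderiv_le_of_lipschitzOnWith {f : E → F}
    {f' : E → E →L[ℝ] F} {s : Set E} {K : ℝ≥0} {x y : E} (hs : Convex ℝ s)
    (hf : ∀ z ∈ s, HasFDerivWithinAt f (f' z) s z) (hlip : LipschitzOnWith K f' s)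
    (hx : x ∈ s) (hy : y ∈ s) :
    ‖f y - f x - f' x (y - x)‖ ≤ K * ‖y - x‖ ^ 2 := by
  have hseg : segment ℝ x y ⊆ s := hs.segment_subset hx hy
  have bound : ∀ z ∈ segment ℝ x y, ‖f' z - f' x‖ ≤ K * ‖y - x‖ := fun z hz =>
    calc ‖f' z - f' x‖ ≤ K * ‖z - x‖ := by
          simpa only [dist_eq_norm] using hlip.dist_le_mul z (hseg hz) x hx
      _ ≤ K * ‖y - x‖ := by gcongr; exact norm_sub_le_of_mem_segment hz
  calc ‖f y - f x - f' x (y - x)‖ ≤ K * ‖y - x‖ * ‖y - x‖ :=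
        (convex_segment x y).norm_image_sub_le_of_norm_hasFDerivWithin_le'
          (fun z hz => (hf z (hseg hz)).mono hseg) bound
          (left_mem_segment ℝ x y) (right_mem_segment ℝ x y)
    _ = K * ‖y - x‖ ^ 2 := by ring

theorem ilc_step_sub_eq (g : E → F) (A : E →L[ℝ] F) (L : F →L[ℝ] E) (u ud : E) :
    u + L (g ud - g u) - ud =
      (ContinuousLinearMap.id ℝ E - L.comp A) (u - ud) + L (g ud - g u - A (ud - u)) := by
  simp only [sub_apply, ContinuousLinearMap.id_apply, ContinuousLinearMap.comp_apply, map_sub]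
  abel

theorem norm_ilc_step_sub_le {g : E → F} {A : E →L[ℝ] F} {L : F →L[ℝ] E} {u ud : E}
    {q C K : ℝ} (hA : ‖ContinuousLinearMap.id ℝ E - L.comp A‖ ≤ q) (hL : ‖L‖ ≤ C)
    (hrem : ‖g ud - g u - A (ud - u)‖ ≤ K * ‖ud - u‖ ^ 2) :
    ‖u + L (g ud - g u) - ud‖ ≤ (q + C * K * ‖u - ud‖) * ‖u - ud‖ := by
  have hC : 0 ≤ C := (norm_nonneg L).trans hL
  rw [norm_sub_rev ud u] at hrem
  rw [ilc_step_sub_eq g A]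
  calc _ ≤ q * ‖u - ud‖ + C * (K * ‖u - ud‖ ^ 2) :=
        (norm_add_le _ _).trans <| add_le_add (ContinuousLinearMap.le_of_opNorm_le _ hA _)
          ((ContinuousLinearMap.le_of_opNorm_le _ hL _).trans (by gcongr))
    _ = (q + C * K * ‖u - ud‖) * ‖u - ud‖ := by ring

theorem norm_ilc_iterate_sub_le_pow {g : E → F} {Dg : E → E →L[ℝ] F} {r : F} {ud : E} {ρ : ℝ}
    {K : ℝ≥0} {C q : ℝ} {L : ℕ → F →L[ℝ] E} {u : ℕ → E} (hud : g ud = r)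
    (hDg : ∀ v ∈ ball ud ρ, HasFDerivAt g (Dg v) v) (hlip : LipschitzOnWith K Dg (ball ud ρ))
    (hu : ∀ ℓ, u (ℓ + 1) = u ℓ + L ℓ (r - g (u ℓ))) (hL : ∀ ℓ, ‖L ℓ‖ ≤ C)
    (hLDg : ∀ ℓ, ‖ContinuousLinearMap.id ℝ E - (L ℓ).comp (Dg (u ℓ))‖ ≤ q)
    (hu₀ : ‖u 0 - ud‖ < ρ) (hc : q + C * K * ‖u 0 - ud‖ ≤ 1) (ℓ : ℕ) :
    ‖u ℓ - ud‖ ≤ (q + C * K * ‖u 0 - ud‖) ^ ℓ * ‖u 0 - ud‖ := by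
  have hCK : 0 ≤ C * K := mul_nonneg ((norm_nonneg _).trans (hL 0)) K.coe_nonneg
  have hq : 0 ≤ q := (norm_nonneg _).trans (hLDg 0)
  refine le_pow_mul_of_le_mul_while_le_initial (x := fun n => ‖u n - ud‖) (by positivity) hc
    (norm_nonneg _) (fun n (hn : ‖u n - ud‖ ≤ ‖u 0 - ud‖) => ?_) ℓ
  have hball : u n ∈ ball ud ρ := mem_ball_iff_norm.2 (hn.trans_lt hu₀)
  have hrem := (convex_ball ud ρ).norm_image_sub_sub_fderiv_le_of_lipschitzOnWith
    (fun v hv => (hDg v hv).hasFDerivWithinAt) hlip hball (mem_ball_self (pos_of_mem_ball hball))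
  calc ‖u (n + 1) - ud‖ ≤ (q + C * K * ‖u n - ud‖) * ‖u n - ud‖ := by
        rw [hu, ← hud]; exact norm_ilc_step_sub_le (hLDg n) (hL n) hrem
    _ ≤ (q + C * K * ‖u 0 - ud‖) * ‖u n - ud‖ := by gcongr

end

theorem avrachenkov_newton_ilc_convergence_general {M : ℕ}
    (g : EuclideanSpace ℝ (Fin M) → EuclideanSpace ℝ (Fin M))
    (r ud : EuclideanSpace ℝ (Fin M)) (hud : g ud = r)
    (ρ : ℝ) (hρ : 0 < ρ)
    (Dg : EuclideanSpace ℝ (Fin M) → (EuclideanSpace ℝ (Fin M) →L[ℝ] EuclideanSpace ℝ (Fin M)))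
    -- `g` is continuously differentiable on the ball, with Lipschitz Jacobian `Dg`
    (hDg : ∀ u ∈ Metric.ball ud ρ, HasFDerivAt g (Dg u) u)
    (lip : NNReal) (hlip : LipschitzOnWith lip Dg (Metric.ball ud ρ))
    (ε₁ : ℝ) (q : ℝ) (hq : q < 1) :
    ∃ ε₂ > (0 : ℝ),
      ∀ (L : ℕ → EuclideanSpace ℝ (Fin M) →L[ℝ] EuclideanSpace ℝ (Fin M))
        (u : ℕ → EuclideanSpace ℝ (Fin M)),
        (∀ ℓ : ℕ, u (ℓ + 1) = u ℓ + L ℓ (r - g (u ℓ))) →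
        (∀ ℓ : ℕ, ‖L ℓ‖ ≤ ε₁) →
        (∀ ℓ : ℕ, ‖ContinuousLinearMap.id ℝ (EuclideanSpace ℝ (Fin M)) -
            (L ℓ).comp (Dg (u ℓ))‖ ≤ q) →
        ‖u 0 - ud‖ < ε₂ →
        Filter.Tendsto (fun ℓ : ℕ => r - g (u ℓ)) Filter.atTop (nhds 0) := by
  obtain ⟨δ, hδ, hδq⟩ := exists_pos_mul_lt (sub_pos.2 hq) (ε₁ * lip)
  refine ⟨min ρ δ, lt_min hρ hδ, fun L u hu hL hLDg hu₀ => ?_⟩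
  have hK : 0 ≤ ε₁ * lip := mul_nonneg ((norm_nonneg _).trans (hL 0)) lip.coe_nonneg
  set c := q + ε₁ * lip * ‖u 0 - ud‖
  have hc₀ : 0 ≤ c := add_nonneg ((norm_nonneg _).trans (hLDg 0)) (by positivity)
  have hc₁ : c < 1 := by
    have : ε₁ * lip * ‖u 0 - ud‖ ≤ ε₁ * lip * δ := by
      gcongr; exact (hu₀.trans_le (min_le_right ρ δ)).le
    linarith
  have hdecay := norm_ilc_iterate_sub_le_pow hud hDg hlip hu hL hLDg
    (hu₀.trans_le (min_le_left ρ δ)) hc₁.le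
  have hconv : Tendsto u atTop (𝓝 ud) := tendsto_iff_norm_sub_tendsto_zero.2 <|
    squeeze_zero (fun _ => norm_nonneg _) hdecay <| by
      simpa using (tendsto_pow_atTop_nhds_zero_of_lt_one hc₀ hc₁).mul_const ‖u 0 - ud‖
  have hg : Tendsto (fun ℓ => g (u ℓ)) atTop (𝓝 r) :=
    hud ▸ (hDg ud (mem_ball_self hρ)).continuousAt.tendsto.comp hconv
  simpa using (tendsto_const_nhds (x := r)).sub hg

/-- **Avrachenkov's convergence theorem for Newton-type ILC.**
Suppose `g` is continuously differentiable on the ball `S(u_d, ρ)` with Lipschitz Jacobian,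
and along the iteration the learning matrices satisfy `‖L_ℓ‖ ≤ ε₁` and
`‖I − L_ℓ Dg(u_ℓ)‖ ≤ q < 1`.  Then there exists `ε₂ > 0` such that whenever `‖u₀ − u_d‖ < ε₂`,
the learning law `u_{ℓ+1} = u_ℓ + L_ℓ (r − g(u_ℓ))` yields tracking error
`e_ℓ = r − g(u_ℓ) → 0`. -/
theorem avrachenkov_newton_ilc_convergence {M : ℕ} (hM : 1 ≤ M)
    (g : EuclideanSpace ℝ (Fin M) → EuclideanSpace ℝ (Fin M))
    (r ud : EuclideanSpace ℝ (Fin M)) (hud : g ud = r)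
    (ρ : ℝ) (hρ : 0 < ρ)
    (Dg : EuclideanSpace ℝ (Fin M) → (EuclideanSpace ℝ (Fin M) →L[ℝ] EuclideanSpace ℝ (Fin M)))
    -- `g` is continuously differentiable on the ball, with Lipschitz Jacobian `Dg`
    (hDg : ∀ u ∈ Metric.ball ud ρ, HasFDerivAt g (Dg u) u)
    (lip : NNReal) (hlip : LipschitzOnWith lip Dg (Metric.ball ud ρ))
    (ε₁ : ℝ) (hε₁ : 0 < ε₁) (q : ℝ) (hq : q < 1) :
    ∃ ε₂ > (0 : ℝ),
      ∀ (L : ℕ → EuclideanSpace ℝ (Fin M) →L[ℝ] EuclideanSpace ℝ (Fin M))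
        (u : ℕ → EuclideanSpace ℝ (Fin M)),
        (∀ ℓ : ℕ, u (ℓ + 1) = u ℓ + L ℓ (r - g (u ℓ))) →
        (∀ ℓ : ℕ, ‖L ℓ‖ ≤ ε₁) →
        (∀ ℓ : ℕ, ‖ContinuousLinearMap.id ℝ (EuclideanSpace ℝ (Fin M)) -
            (L ℓ).comp (Dg (u ℓ))‖ ≤ q) →
        ‖u 0 - ud‖ < ε₂ →
        Filter.Tendsto (fun ℓ : ℕ => r - g (u ℓ)) Filter.atTop (nhds 0) :=
  avrachenkov_newton_ilc_convergence_general g r ud hud ρ hρ Dg hDg lip hlip ε₁ q hq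
end
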